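/- Let Γ be a good pointclass such that every subset of [ℕ]^ω belonging to Γ has the Ramsey property. Then no Hamel basis belongs to Γ. -/

import Mathlib

open Set

open Classical in
/-- The characteristic function of a set, viewed as a point of the Cantor space `α → Bool`. -/
noncomputable def chi {α : Type} (s : Set α) : α → Bool :=
  fun a => if a ∈ s then true else false
/-- A *good pointclass*: a collection of subsets of Polish spaces containing all clopen
sets and closed under countable intersections, countable unions, finite products,
continuous images, and continuous preimages. -/
structure GoodPointclass : Type 1 where
  mem : ∀ (X : Type) [TopologicalSpace X], Set (Set X)
  clopen_mem : ∀ (X : Type) [TopologicalSpace X] [PolishSpace X] (s : Set X),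
    IsClopen s → s ∈ mem X
  iInter_mem : ∀ (X : Type) [TopologicalSpace X] [PolishSpace X] (s : ℕ → Set X),
    (∀ n, s n ∈ mem X) → (⋂ n, s n) ∈ mem X
  iUnion_mem : ∀ (X : Type) [TopologicalSpace X] [PolishSpace X] (s : ℕ → Set X),
    (∀ n, s n ∈ mem X) → (⋃ n, s n) ∈ mem X
  prod_mem : ∀ (X Y : Type) [TopologicalSpace X] [PolishSpace X]
    [TopologicalSpace Y] [PolishSpace Y] (s : Set X) (t : Set Y),
    s ∈ mem X → t ∈ mem Y → s ×ˢ t ∈ mem (X × Y)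
  image_mem : ∀ (X Y : Type) [TopologicalSpace X] [PolishSpace X]
    [TopologicalSpace Y] [PolishSpace Y] (f : X → Y) (s : Set X),
    Continuous f → s ∈ mem X → f '' s ∈ mem Y
  preimage_mem : ∀ (X Y : Type) [TopologicalSpace X] [PolishSpace X]
    [TopologicalSpace Y] [PolishSpace Y] (f : X → Y) (t : Set Y),
    Continuous f → t ∈ mem Y → f ⁻¹' t ∈ mem X
/-- A set `X ⊆ [ℕ]^ω` has the Ramsey property: there is an infinite `H ⊆ ℕ` with
`[H]^ω ⊆ X` or `[H]^ω ∩ X = ∅`. -/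
def RamseyProp (X : Set (Set ℕ)) : Prop :=
  ∃ H : Set ℕ, H.Infinite ∧
    ((∀ y : Set ℕ, y.Infinite → y ⊆ H → y ∈ X) ∨
     (∀ y : Set ℕ, y.Infinite → y ⊆ H → y ∉ X))
/-- A Hamel basis: a basis of `ℝ` as a vector space over `ℚ`. -/
def IsHamelBasis (B : Set ℝ) : Prop :=
  LinearIndependent ℚ ((↑) : B → ℝ) ∧ Submodule.span ℚ B = ⊤

/-!
Fix `b₀ ∈ B` and code a set `y ⊆ ℕ` by the real `b₀ · ∑_{n ∈ y} 3⁻ⁿ`; let `ν y` be the number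
of Hamel coordinates of this code other than the one at `b₀`. Changing `y` by finitely many
elements moves the code by a rational multiple of `b₀`, so `ν` only depends on the tail of `y`.
If `B ∈ Γ`, each set `{y | ν y ≤ k}` is the preimage of a set in `Γ` under a continuous map,
hence Ramsey, and a diagonal argument gives an infinite `H` on whose infinite subsets `ν` is
constant, say `k`. Split `H` into disjoint infinite blocks. A Δ-system argument shows that
infinitely many blocks have the same `k`-element support `R`; once the signs of their coordinates
are stabilised, adjoining suitably many of them to an infinite subset `y` of another block cancels
no coordinate in `R`, so the support of `y` is inside `R`. Thus the injective coding maps the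
uncountably many infinite subsets of that block into the countable set of reals whose coordinates
lie in `R ∪ {b₀}`.
-/

open Cardinal Function

lemma chi_apply_eq_true {α : Type} {s : Set α} {a : α} : chi s a = true ↔ a ∈ s := by
  simp [chi]

lemma setOf_chi {α : Type} (s : Set α) : {a | chi s a = true} = s := by
  ext a
  exact chi_apply_eq_true

lemma chi_setOf {α : Type} (g : α → Bool) : chi {a | g a = true} = g := by
  funext a
  cases h : g a <;> simp [chi, h]

lemma chi_injective {α : Type} : Injective (chi : Set α → α → Bool) := fun s t h => by
  rw [← setOf_chi s, ← setOf_chi t, h]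

lemma image_chi_setOf_infinite (P : (ℕ → Bool) → Prop) :
    chi '' {x : Set ℕ | x.Infinite ∧ P (chi x)} = {g | {n | g n = true}.Infinite} ∩ {g | P g} := by
  ext g
  constructor
  · rintro ⟨x, ⟨hx, hPx⟩, rfl⟩
    exact ⟨show {n | chi x n = true}.Infinite by rwa [setOf_chi], hPx⟩
  · rintro ⟨hg, hPg⟩
    exact ⟨{n | g n = true}, ⟨hg, by rwa [chi_setOf]⟩, chi_setOf g⟩

lemma chi_image {e : ℕ → ℕ} (he : Injective e) (s : Set ℕ) :
    chi (e '' s) = extend e (chi s) fun _ => false := by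
  funext n
  by_cases hn : ∃ m, e m = n
  · obtain ⟨m, rfl⟩ := hn
    simp [chi, he.extend_apply, he.mem_set_image]
  · rw [extend_apply' _ _ _ hn]
    simpa [chi] using fun m _ h => hn ⟨m, h⟩

lemma continuous_extend_false (e : ℕ → ℕ) :
    Continuous fun g : ℕ → Bool => extend e g fun _ => false := by
  classical
  refine continuous_pi fun n => ?_
  simp only [extend_def]
  split_ifs
  · exact continuous_apply _
  · exact continuous_const

lemma cantorFunction_chi (c : ℝ) (s : Set ℕ) :
    cantorFunction c (chi s) = ∑' n, s.indicator (c ^ ·) n := by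
  refine tsum_congr fun n => ?_
  by_cases h : n ∈ s <;> simp [cantorFunctionAux, chi, h]

lemma continuous_cantorFunction {c : ℝ} (h0 : 0 ≤ c) (h1 : c < 1) :
    Continuous (cantorFunction c) := by
  refine continuous_tsum (u := (c ^ ·)) (fun n => ?_) (summable_geometric_of_lt_one h0 h1)
    fun n g => ?_
  · exact (continuous_of_discreteTopology (f := fun b : Bool => cond b (c ^ n) 0)).comp
      (continuous_apply n)
  · cases h : g n <;> simp [cantorFunctionAux, h, abs_of_nonneg h0, pow_nonneg h0]

lemma cantorFunction_chi_union {c : ℝ} (h0 : 0 ≤ c) (h1 : c < 1) {s t : Set ℕ}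
    (hst : Disjoint s t) :
    cantorFunction c (chi (s ∪ t)) = cantorFunction c (chi s) + cantorFunction c (chi t) := by
  have hsum : ∀ u : Set ℕ, Summable (u.indicator (c ^ ·)) := fun u =>
    (summable_geometric_of_lt_one h0 h1).indicator u
  simp only [cantorFunction_chi, indicator_union_of_disjoint hst, (hsum s).tsum_add (hsum t)]

lemma exists_rat_cantorFunction_chi_eq (c : ℚ) {s : Set ℕ} (hs : s.Finite) :
    ∃ q : ℚ, cantorFunction c (chi s) = q := by
  lift s to Finset ℕ using hs
  refine ⟨∑ n ∈ s, c ^ n, ?_⟩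
  rw [cantorFunction_chi, tsum_eq_sum (s := s) fun n hn => indicator_of_notMem hn _]
  push_cast
  exact Finset.sum_congr rfl fun n hn => indicator_of_mem (Finset.mem_coe.mpr hn) _

instance : PolishSpace (ℕ → Bool) := {}

namespace GoodPointclass

variable (Γ : GoodPointclass) {X : Type} [TopologicalSpace X] [PolishSpace X]

lemma inter_mem {s t : Set X} (hs : s ∈ Γ.mem X) (ht : t ∈ Γ.mem X) : s ∩ t ∈ Γ.mem X :=
  Γ.preimage_mem X (X × X) (fun x => (x, x)) (s ×ˢ t) (continuous_id.prodMk continuous_id)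
    (Γ.prod_mem X X s t hs ht)

lemma iUnion_mem_of_countable {ι : Type*} [Countable ι] [Nonempty ι] {s : ι → Set X}
    (hs : ∀ i, s i ∈ Γ.mem X) : (⋃ i, s i) ∈ Γ.mem X := by
  obtain ⟨f, hf⟩ := exists_surjective_nat ι
  rw [← hf.iUnion_comp]
  exact Γ.iUnion_mem X _ fun n => hs (f n)

lemma singleton_mem (x : X) : {x} ∈ Γ.mem X := by
  have : Nonempty X := ⟨x⟩
  simpa using Γ.image_mem X X (fun _ => x) univ continuous_const (Γ.clopen_mem X univ isClopen_univ)

lemma setOf_infinite_mem : {g : ℕ → Bool | {n | g n = true}.Infinite} ∈ Γ.mem (ℕ → Bool) := by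
  have : {g : ℕ → Bool | {n | g n = true}.Infinite} =
      ⋂ n, ⋃ m, (fun g : ℕ → Bool => g m) ⁻¹' {b | n < m ∧ b = true} := by
    ext g
    simp only [mem_ofPred_eq, mem_iInter, mem_iUnion, mem_preimage]
    exact ⟨fun h n => (h.exists_gt n).imp fun m hm => ⟨hm.2, hm.1⟩,
      fun h => infinite_of_forall_exists_gt fun n => (h n).imp fun m hm => ⟨hm.2, hm.1⟩⟩
  rw [this]
  exact Γ.iInter_mem _ _ fun n => Γ.iUnion_mem _ _ fun m =>
    Γ.clopen_mem _ _ ((isClopen_discrete _).preimage (continuous_apply m))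

end GoodPointclass

def IsHomogeneous (X : Set (Set ℕ)) (H : Set ℕ) : Prop :=
  (∀ y : Set ℕ, y.Infinite → y ⊆ H → y ∈ X) ∨ (∀ y : Set ℕ, y.Infinite → y ⊆ H → y ∉ X)

lemma IsHomogeneous.mono {X : Set (Set ℕ)} {H H' : Set ℕ} (h : IsHomogeneous X H)
    (hH : H' ⊆ H) : IsHomogeneous X H' :=
  h.imp (fun h y hy hyH => h y hy (hyH.trans hH)) fun h y hy hyH => h y hy (hyH.trans hH)

lemma exists_isHomogeneous_preimage (Γ : GoodPointclass)
    (hRamsey : ∀ X : Set (Set ℕ), (∀ x ∈ X, x.Infinite) →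
      chi '' X ∈ Γ.mem (ℕ → Bool) → RamseyProp X)
    {Y : Type} [TopologicalSpace Y] [PolishSpace Y] {F : (ℕ → Bool) → Y} (hF : Continuous F)
    {A : Set Y} (hA : A ∈ Γ.mem Y) {K : Set ℕ} (hK : K.Infinite) :
    ∃ H ⊆ K, H.Infinite ∧ IsHomogeneous (chi ⁻¹' (F ⁻¹' A)) H := by
  set e := Nat.nth (· ∈ K)
  have he : Injective e := (Nat.nth_strictMono hK).injective
  let X := {x : Set ℕ | x.Infinite ∧ F (extend e (chi x) fun _ => false) ∈ A}
  have hX : chi '' X ∈ Γ.mem (ℕ → Bool) := by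
    rw [image_chi_setOf_infinite fun g => F (extend e g fun _ => false) ∈ A]
    exact Γ.inter_mem Γ.setOf_infinite_mem
      (Γ.preimage_mem _ _ _ A (hF.comp (continuous_extend_false e)) hA)
  obtain ⟨H, hH, hhom⟩ := hRamsey X (fun x hx => hx.1) hX
  have hpullback : ∀ y ⊆ e '' H, y.Infinite →
      (e ⁻¹' y).Infinite ∧ e ⁻¹' y ⊆ H ∧ (e ⁻¹' y ∈ X ↔ F (chi y) ∈ A) := by
    intro y hyH hy
    have hy_eq : e '' (e ⁻¹' y) = y :=
      image_preimage_eq_of_subset (hyH.trans (image_subset_range e H))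
    have hinf : (e ⁻¹' y).Infinite := Infinite.of_image e (by rwa [hy_eq])
    refine ⟨hinf, fun m hm => he.mem_set_image.mp (hyH hm), ?_⟩
    simp only [X, mem_ofPred_eq, ← chi_image he, hy_eq, hinf, true_and]
  refine ⟨e '' H, (image_subset_range e H).trans (Nat.range_nth_of_infinite hK).subset,
    hH.image he.injOn, hhom.imp (fun hin y hy hyH => ?_) fun hout y hy hyH => ?_⟩
  · obtain ⟨hinf, hsub, hmem⟩ := hpullback y hyH hy
    exact hmem.mp (hin _ hinf hsub)
  · obtain ⟨hinf, hsub, hmem⟩ := hpullback y hyH hy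
    exact fun hyA => hout _ hinf hsub (hmem.mpr hyA)

lemma exists_infinite_isHomogeneous_inter_Ici {X : ℕ → Set (Set ℕ)}
    (h : ∀ j K, K.Infinite → ∃ H ⊆ K, H.Infinite ∧ IsHomogeneous (X j) H) :
    ∃ H : Set ℕ, H.Infinite ∧ ∀ j, ∃ n, IsHomogeneous (X j) (H ∩ Ici n) := by
  choose! next hsub hinf hhom using h
  let K : ℕ → Set ℕ := fun j => Nat.rec (next 0 univ) (fun j K => next (j + 1) K) j
  have hKinf : ∀ j, (K j).Infinite := by
    intro j
    induction j with
    | zero => exact hinf 0 univ infinite_univ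
    | succ j ih => exact hinf (j + 1) (K j) ih
  have hKanti : Antitone K := antitone_nat_of_succ_le fun j => hsub (j + 1) (K j) (hKinf j)
  have hKhom : ∀ j, IsHomogeneous (X j) (K j) := by
    intro j
    cases j with
    | zero => exact hhom 0 univ infinite_univ
    | succ j => exact hhom (j + 1) (K j) (hKinf j)
  -- Beyond `(range j).sup h` only points `h i` with `j ≤ i` remain, and these lie in `K j`.
  choose h hhK hh using fun j => (hKinf j).exists_gt j
  refine ⟨range h, infinite_of_forall_exists_gt fun j => ⟨h j, mem_range_self j, hh j⟩,
    fun j => ⟨(Finset.range j).sup h + 1, (hKhom j).mono ?_⟩⟩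
  rintro _ ⟨⟨i, rfl⟩, hi⟩
  have hji : j ≤ i := by
    by_contra hij
    have := Finset.le_sup (f := h) (Finset.mem_range.mpr (not_le.mp hij))
    simp only [mem_Ici] at hi
    omega
  exact hKanti hji (hhK i)

lemma exists_infinite_forall_eq {f : Set ℕ → ℕ} (hf : ∀ y n, f (y ∩ Ici n) = f y)
    (h : ∀ k K, K.Infinite → ∃ H ⊆ K, H.Infinite ∧ IsHomogeneous {y | f y ≤ k} H) :
    ∃ H : Set ℕ, H.Infinite ∧ ∀ y ⊆ H, y.Infinite → f y = f H := by
  obtain ⟨H, hH, hhom⟩ := exists_infinite_isHomogeneous_inter_Ici h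
  refine ⟨H, hH, fun y hyH hy => ?_⟩
  have htail : ∀ {z : Set ℕ} (n : ℕ), z.Infinite → (z ∩ Ici n).Infinite := fun n hz => by
    simpa [sdiff_eq, compl_Iio] using hz.sdiff (finite_Iio n)
  have key : ∀ k, f y ≤ k ↔ f H ≤ k := by
    intro k
    obtain ⟨n, hin | hout⟩ := hhom k
    · rw [← hf y n, ← hf H n]
      exact iff_of_true (hin _ (htail n hy) (inter_subset_inter_left _ hyH))
        (hin _ (htail n hH) subset_rfl)
    · rw [← hf y n, ← hf H n]
      exact iff_of_false (hout _ (htail n hy) (inter_subset_inter_left _ hyH))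
        (hout _ (htail n hH) subset_rfl)
  exact le_antisymm ((key _).mpr le_rfl) ((key _).mp le_rfl)

def FinitelyAdditive {M : Type*} [Add M] (c : Set ℕ → M) : Prop :=
  ∀ s t, Disjoint s t → c (s ∪ t) = c s + c t

namespace FinitelyAdditive

variable {M : Type*} [AddCommGroup M] {c : Set ℕ → M}

lemma empty (hc : FinitelyAdditive c) : c ∅ = 0 := by
  simpa using hc ∅ ∅ (disjoint_empty _)

lemma biUnion (hc : FinitelyAdditive c) {z : ℕ → Set ℕ} (hz : Pairwise (Disjoint on z))
    (J : Finset ℕ) : c (⋃ j ∈ J, z j) = ∑ j ∈ J, c (z j) := by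
  induction J using Finset.induction_on with
  | empty => simpa using hc.empty
  | insert a J ha ih =>
    rw [Finset.set_biUnion_insert, Finset.sum_insert ha, ← ih]
    exact hc _ _ (disjoint_iUnion₂_right.mpr fun j hj => hz (ne_of_mem_of_not_mem hj ha).symm)

lemma inter_Ici (hc : FinitelyAdditive c) (hfin : ∀ s : Set ℕ, s.Finite → c s = 0)
    (y : Set ℕ) (n : ℕ) : c (y ∩ Ici n) = c y := by
  have hsmall : (y \ Ici n).Finite := (finite_Iio n).subset fun m hm => mem_Iio.mpr (not_le.mp hm.2)
  conv_rhs => rw [← inter_union_sdiff y (Ici n)]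
  rw [hc _ _ disjoint_sdiff_inter.symm, hfin _ hsmall, add_zero]

end FinitelyAdditive

lemma Set.Infinite.exists_pairwise_disjoint {K : Set ℕ} (hK : K.Infinite) :
    ∃ z : ℕ → Set ℕ, Pairwise (Disjoint on z) ∧ (∀ i, (z i).Infinite) ∧ ∀ i, z i ⊆ K := by
  have he := (Nat.nth_strictMono hK).injective
  refine ⟨fun i => range fun m => Nat.nth (· ∈ K) (Nat.pair i m), fun i j hij => ?_,
    fun i => infinite_range_of_injective fun m m' h => (Nat.pair_eq_pair.mp (he h)).2, ?_⟩
  · rw [onFun, disjoint_left]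
    rintro _ ⟨m, rfl⟩ ⟨m', h⟩
    exact hij (Nat.pair_eq_pair.mp (he h)).1.symm
  · rintro i _ ⟨m, rfl⟩
    exact Nat.nth_mem_of_infinite hK _

lemma Finset.exists_strictMono_pairwise_disjoint {α : Type*} (f : ℕ → Finset α)
    (hfin : ∀ a, {i | a ∈ f i}.Finite) :
    ∃ φ : ℕ → ℕ, StrictMono φ ∧ Pairwise (Disjoint on fun i => f (φ i)) := by
  have hbound : ∀ p, ∃ M, ∀ i ≤ p, ∀ j ≥ M, Disjoint (f i) (f j) := by
    intro p
    have hmeet : {j | ∃ i ≤ p, ¬Disjoint (f i) (f j)}.Finite := by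
      refine ((finite_Iic p).biUnion fun i _ =>
        (f i).finite_toSet.biUnion fun a _ => hfin a).subset ?_
      rintro j ⟨i, hip, hij⟩
      obtain ⟨a, hai, haj⟩ := Finset.not_disjoint_iff.mp hij
      exact Set.mem_biUnion (show i ∈ Set.Iic p from hip)
        (Set.mem_biUnion (Finset.mem_coe.mpr hai) haj)
    obtain ⟨M, hM⟩ := hmeet.bddAbove
    exact ⟨M + 1, fun i hi j hj => by_contra fun h => by have := hM ⟨i, hi, h⟩; omega⟩
  choose M hM using hbound
  let φ : ℕ → ℕ := fun n => (fun p => max (p + 1) (M p))^[n] 0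
  have hsucc : ∀ n, φ (n + 1) = max (φ n + 1) (M (φ n)) := fun n =>
    iterate_succ_apply' _ _ _
  have hφ : StrictMono φ := strictMono_nat_of_lt_succ fun n => by rw [hsucc]; omega
  have hlt : ∀ i j, i < j → Disjoint (f (φ i)) (f (φ j)) := by
    intro i j hij
    obtain ⟨n, rfl⟩ : ∃ n, j = n + 1 := ⟨j - 1, by omega⟩
    exact hM (φ n) (φ i) (hφ.monotone (by omega)) _ (by rw [hsucc]; omega)
  refine ⟨φ, hφ, fun i j hij => ?_⟩
  rcases hij.lt_or_gt with h | h
  · exact hlt i j h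
  · exact (hlt j i h).symm

theorem Finset.exists_strictMono_inter_eq {α : Type*} [DecidableEq α] (k : ℕ) :
    ∀ f : ℕ → Finset α, (∀ i, (f i).card ≤ k) →
      ∃ φ : ℕ → ℕ, StrictMono φ ∧ ∃ R : Finset α, ∀ i j, i ≠ j → f (φ i) ∩ f (φ j) = R := by
  induction k with
  | zero =>
    intro f hf
    refine ⟨id, strictMono_id, ∅, fun i j _ => ?_⟩
    simp [Finset.card_eq_zero.mp (Nat.le_zero.mp (hf i))]
  | succ k ih =>
    intro f hf
    by_cases hfin : ∀ a, {i | a ∈ f i}.Finite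
    · obtain ⟨φ, hφ, hdisj⟩ := Finset.exists_strictMono_pairwise_disjoint f hfin
      exact ⟨φ, hφ, ∅, fun i j hij => Finset.disjoint_iff_inter_eq_empty.mp (hdisj hij)⟩
    push Not at hfin
    obtain ⟨a, ha⟩ := hfin
    have hea : ∀ i, a ∈ f (Nat.nth (a ∈ f ·) i) := Nat.nth_mem_of_infinite ha
    obtain ⟨φ, hφ, R, hR⟩ := ih (fun i => (f (Nat.nth (a ∈ f ·) i)).erase a) fun i => by
      rw [Finset.card_erase_of_mem (hea i)]
      have := hf (Nat.nth (a ∈ f ·) i)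
      omega
    refine ⟨Nat.nth (a ∈ f ·) ∘ φ, (Nat.nth_strictMono ha).comp hφ, insert a R,
      fun i j hij => ?_⟩
    rw [← hR i j hij]
    ext b
    by_cases hb : b = a <;> simp [hb, hea]

section Supports

variable {ι : Type*}

lemma sum_card_sdiff_le_card_support_sum [DecidableEq ι] {M : Type*} [AddCommMonoid M]
    {v : ℕ → ι →₀ M} {R : Finset ι} (hR : ∀ i j, i ≠ j → (v i).support ∩ (v j).support = R)
    (J : Finset ℕ) : ∑ j ∈ J, ((v j).support \ R).card ≤ (∑ j ∈ J, v j).support.card := by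
  rw [← Finset.card_biUnion]
  · refine Finset.card_le_card fun a ha => ?_
    obtain ⟨j, hj, haj⟩ := Finset.mem_biUnion.mp ha
    obtain ⟨haj, haR⟩ := Finset.mem_sdiff.mp haj
    have hother : ∀ i ∈ J, i ≠ j → v i a = 0 := fun i _ hij =>
      Finsupp.notMem_support_iff.mp fun hai => haR (hR i j hij ▸ Finset.mem_inter.mpr ⟨hai, haj⟩)
    rw [Finsupp.mem_support_iff, Finsupp.finsetSum_apply,
      Finset.sum_eq_single j hother fun h => absurd hj h]
    exact Finsupp.mem_support_iff.mp haj
  · intro i _ j _ hij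
    rw [onFun, Finset.disjoint_left]
    intro a hai haj
    exact (Finset.mem_sdiff.mp hai).2
      (hR i j hij ▸ Finset.mem_inter.mpr ⟨(Finset.mem_sdiff.mp hai).1, (Finset.mem_sdiff.mp haj).1⟩)

lemma support_eq_of_inter_eq [DecidableEq ι] {M : Type*} [AddCommMonoid M] {v : ℕ → ι →₀ M}
    {R : Finset ι} (hR : ∀ i j, i ≠ j → (v i).support ∩ (v j).support = R) {k : ℕ}
    (hk : ∀ i, (v i).support.card = k) (hsum : (∑ j ∈ Finset.range (k + 1), v j).support.card ≤ k)
    (i : ℕ) : (v i).support = R := by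
  have hRsub : ∀ i, R ⊆ (v i).support := fun i =>
    hR i (i + 1) (by omega) ▸ Finset.inter_subset_left
  have hRcard : k ≤ R.card := by
    by_contra hlt
    have hpetal : ∑ _j ∈ Finset.range (k + 1), 1 ≤
        ∑ j ∈ Finset.range (k + 1), ((v j).support \ R).card :=
      Finset.sum_le_sum fun j _ => by rw [Finset.card_sdiff_of_subset (hRsub j), hk j]; omega
    have := sum_card_sdiff_le_card_support_sum hR (Finset.range (k + 1))
    simp only [Finset.sum_const, Finset.card_range, smul_eq_mul, mul_one] at hpetal
    omega
  exact (Finset.eq_of_subset_of_card_le (hRsub i) (by rw [hk i]; exact hRcard)).symm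

lemma exists_strictMono_forall_pos_iff {α : Type*} [Zero α] [LT α] (v : ℕ → ι → α)
    (R : Finset ι) :
    ∃ φ : ℕ → ℕ, StrictMono φ ∧ ∀ n, ∀ b ∈ R, (0 < v (φ n) b ↔ 0 < v (φ 0) b) := by
  classical
  obtain ⟨p, hp⟩ := Finite.exists_infinite_fiber fun n (b : R) => decide (0 < v n b)
  obtain ⟨φ, hφ, hφp⟩ := Filter.extraction_of_frequently_atTop
    (Nat.frequently_atTop_iff_infinite.mpr (infinite_coe_iff.mp hp))
  refine ⟨φ, hφ, fun n b hb => ?_⟩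
  simpa using congrFun ((hφp n).trans (hφp 0).symm) ⟨b, hb⟩

lemma injective_partialSum {α : Type*} [AddCommGroup α] [LinearOrder α] [IsOrderedAddMonoid α]
    {a : ℕ → α} (ha : (∀ j, 0 < a j) ∨ ∀ j, a j < 0) :
    Injective fun m => ∑ j ∈ Finset.range m, a j := by
  rcases ha with ha | ha
  · exact (strictMono_nat_of_lt_succ fun m => by simpa [Finset.sum_range_succ] using ha m).injective
  · exact (strictAnti_nat_of_succ_lt fun m => by simpa [Finset.sum_range_succ] using ha m).injective

lemma exists_le_card_forall_add_partialSum_ne {α : Type*} [AddCommGroup α] (x : ι → α)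
    (v : ℕ → ι → α) (R : Finset ι)
    (hv : ∀ b ∈ R, Injective fun m => ∑ j ∈ Finset.range m, v j b) :
    ∃ m ≤ R.card, ∀ b ∈ R, x b + ∑ j ∈ Finset.range m, v j b ≠ 0 := by
  by_contra! h
  obtain ⟨b₀, -⟩ := h 0 (Nat.zero_le _)
  have : Nonempty ι := ⟨b₀⟩
  choose! b hbR hb using h
  obtain ⟨m₁, hm₁, m₂, hm₂, hne, heq⟩ := Finset.exists_ne_map_eq_of_card_lt_of_maps_to
    (s := Finset.range (R.card + 1)) (by simp) fun m hm => hbR m (Finset.mem_range_succ_iff.mp hm)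
  refine hne (hv _ (hbR m₁ (Finset.mem_range_succ_iff.mp hm₁)) ?_)
  have h₁ := hb m₁ (Finset.mem_range_succ_iff.mp hm₁)
  have h₂ := hb m₂ (Finset.mem_range_succ_iff.mp hm₂)
  rw [← heq] at h₂
  exact add_left_cancel (h₁.trans h₂.symm)

lemma support_subset_of_card_support_add_partialSum_le (u : ι →₀ ℚ) (v : ℕ → ι →₀ ℚ)
    (R : Finset ι) (hv : ∀ j, (v j).support = R) (hsign : ∀ j, ∀ b ∈ R, (0 < v j b ↔ 0 < v 0 b))
    (hcard : ∀ m, (u + ∑ j ∈ Finset.range m, v j).support.card ≤ R.card) : u.support ⊆ R := by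
  classical
  have hinj : ∀ b ∈ R, Injective fun m => ∑ j ∈ Finset.range m, v j b := by
    intro b hb
    have hne : ∀ j, v j b ≠ 0 := fun j => Finsupp.mem_support_iff.mp (hv j ▸ hb)
    apply injective_partialSum
    by_cases h0 : 0 < v 0 b
    · exact Or.inl fun j => (hsign j b hb).mpr h0
    · exact Or.inr fun j => lt_of_le_of_ne (not_lt.mp fun h => h0 ((hsign j b hb).mp h)) (hne j)
  obtain ⟨m, -, hm⟩ := exists_le_card_forall_add_partialSum_ne u (fun j => v j) R hinj
  have hsub : R ∪ u.support ⊆ (u + ∑ j ∈ Finset.range m, v j).support := by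
    intro b hb
    rw [Finsupp.mem_support_iff, Finsupp.add_apply, Finsupp.finsetSum_apply]
    by_cases hbR : b ∈ R
    · exact hm b hbR
    · have hzero : ∀ j, v j b = 0 := fun j => Finsupp.notMem_support_iff.mp (hv j ▸ hbR)
      simpa [hzero] using (Finset.mem_union.mp hb).resolve_left hbR
  have hR := Finset.eq_of_subset_of_card_le Finset.subset_union_left
    ((Finset.card_le_card hsub).trans (hcard m))
  exact hR ▸ Finset.subset_union_right

theorem FinitelyAdditive.exists_support_subset {c : Set ℕ → ι →₀ ℚ} (hc : FinitelyAdditive c)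
    {K : Set ℕ} (hK : K.Infinite) {k : ℕ}
    (hk : ∀ y ⊆ K, y.Infinite → (c y).support.card = k) :
    ∃ W ⊆ K, W.Infinite ∧ ∃ T : Finset ι, ∀ y ⊆ W, y.Infinite → (c y).support ⊆ T := by
  classical
  obtain ⟨z, hz, hzinf, hzK⟩ := hK.exists_pairwise_disjoint
  obtain ⟨φ, hφ, R, hR⟩ := Finset.exists_strictMono_inter_eq k (fun i => (c (z i)).support)
    fun i => (hk _ (hzK i) (hzinf i)).le
  have hzφ : Pairwise (Disjoint on fun i => z (φ i)) := hz.comp_of_injective hφ.injective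
  have hsupp : ∀ i, (c (z (φ i))).support = R := by
    refine support_eq_of_inter_eq hR (fun i => hk _ (hzK _) (hzinf _)) ?_
    rw [← hc.biUnion hzφ]
    exact (hk _ (iUnion₂_subset fun i _ => hzK _)
      ((hzinf (φ 0)).mono (subset_biUnion_of_mem (u := fun i => z (φ i)) (by simp)))).le
  obtain ⟨ψ, hψ, hsign⟩ := exists_strictMono_forall_pos_iff (fun i => ⇑(c (z (φ i)))) R
  set Z : ℕ → Set ℕ := fun n => z (φ (ψ n))
  have hZ : Pairwise (Disjoint on fun j => Z (j + 1)) :=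
    hzφ.comp_of_injective (hψ.injective.comp (add_left_injective 1))
  refine ⟨Z 0, hzK _, hzinf _, R, fun y hyZ hy => ?_⟩
  -- Adjoin the blocks `Z 1, …, Z m` to `y`: for a suitable `m` no coordinate in `R` cancels.
  refine support_subset_of_card_support_add_partialSum_le (c y) (fun j => c (Z (j + 1))) R
    (fun j => hsupp _) (fun j b hb => (hsign (j + 1) b hb).trans (hsign 1 b hb).symm) fun m => ?_
  have hdisj : Disjoint y (⋃ j ∈ Finset.range m, Z (j + 1)) :=
    disjoint_iUnion₂_right.mpr fun j _ =>
      (hzφ (hψ.injective.ne (by omega : 0 ≠ j + 1))).mono_left hyZ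
  rw [← hc.biUnion hZ, ← hc _ _ hdisj, ← hsupp (ψ 0), hk _ (hzK _) (hzinf _)]
  exact (hk _ (union_subset (hyZ.trans (hzK _)) (iUnion₂_subset fun j _ => hzK _))
    (hy.mono subset_union_left)).le

end Supports

lemma Finsupp.erase_eq_zero_iff {ι M : Type*} [AddZeroClass M] {f : ι →₀ M} {a : ι} :
    f.erase a = 0 ↔ ∃ q, f = Finsupp.single a q := by
  refine ⟨fun h => ⟨f a, (single_add_erase a f).symm.trans (by rw [h, add_zero])⟩, ?_⟩
  rintro ⟨q, rfl⟩
  exact erase_single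

lemma Finsupp.card_support_erase_le_succ_iff {ι M : Type*} [AddZeroClass M] [DecidableEq ι]
    {f : ι →₀ M} {a : ι} {k : ℕ} :
    (f.erase a).support.card ≤ k + 1 ↔
      ∃ i q g, f = Finsupp.single i q + g ∧ (g.erase a).support.card ≤ k := by
  constructor
  · intro hf
    obtain hempty | ⟨i, hi⟩ := (f.erase a).support.eq_empty_or_nonempty
    · exact ⟨a, 0, f, by simp, by rw [hempty, Finset.card_empty]; omega⟩
    · refine ⟨i, f i, f.erase i, (single_add_erase i f).symm, ?_⟩
      rw [support_erase, support_erase, Finset.erase_right_comm, ← support_erase,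
        Finset.card_erase_of_mem hi]
      omega
  · rintro ⟨i, q, g, rfl, hg⟩
    rw [erase_add]
    calc ((single i q).erase a + g.erase a).support.card
        ≤ ((single i q).erase a).support.card + (g.erase a).support.card :=
          (Finset.card_le_card support_add).trans (Finset.card_union_le _ _)
      _ ≤ 1 + k := by
          refine Nat.add_le_add ((Finset.card_le_card ?_).trans (Finset.card_singleton i).le) hg
          rw [support_erase]
          exact (Finset.erase_subset _ _).trans support_single_subset
      _ = k + 1 := by omega

def hamelLevel (B : Set ℝ) (b₀ : ℝ) : ℕ → Set ℝ
  | 0 => range fun q : ℚ => (q : ℝ) * b₀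
  | k + 1 => ⋃ q : ℚ, (fun p : ℝ × ℝ => (q : ℝ) * p.1 + p.2) '' (B ×ˢ hamelLevel B b₀ k)

lemma GoodPointclass.hamelLevel_mem (Γ : GoodPointclass) {B : Set ℝ} (hBΓ : B ∈ Γ.mem ℝ)
    (b₀ : ℝ) (k : ℕ) : hamelLevel B b₀ k ∈ Γ.mem ℝ := by
  induction k with
  | zero =>
    rw [hamelLevel, ← iUnion_singleton_eq_range]
    exact Γ.iUnion_mem_of_countable fun q => Γ.singleton_mem _
  | succ k ih =>
    exact Γ.iUnion_mem_of_countable fun q => Γ.image_mem _ _ _ _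
      ((continuous_const.mul continuous_fst).add continuous_snd) (Γ.prod_mem _ _ _ _ hBΓ ih)

namespace IsHamelBasis

variable {B : Set ℝ} (hB : IsHamelBasis B)

noncomputable def basis : Module.Basis B ℚ ℝ :=
  Module.Basis.mk hB.1 (by rw [Subtype.range_coe]; exact hB.2.ge)

lemma basis_apply (i : B) : hB.basis i = i := Module.Basis.mk_apply _ _ _

lemma repr_mul_coe (q : ℚ) (i : B) : hB.basis.repr ((q : ℝ) * i) = Finsupp.single i q := by
  rw [← Rat.smul_def, ← hB.basis_apply i, map_smul, Module.Basis.repr_self,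
    Finsupp.smul_single, smul_eq_mul, mul_one]

lemma mem_hamelLevel_iff (b₀ : B) {k : ℕ} {r : ℝ} :
    r ∈ hamelLevel B b₀ k ↔ ((hB.basis.repr r).erase b₀).support.card ≤ k := by
  induction k generalizing r with
  | zero =>
    simp only [hamelLevel, mem_range, Nat.le_zero, Finset.card_eq_zero, Finsupp.support_eq_empty,
      Finsupp.erase_eq_zero_iff]
    constructor
    · rintro ⟨q, rfl⟩
      exact ⟨q, hB.repr_mul_coe q b₀⟩
    · rintro ⟨q, hq⟩
      exact ⟨q, hB.basis.repr.injective (by rw [hB.repr_mul_coe, hq])⟩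
  | succ k ih =>
    rw [Finsupp.card_support_erase_le_succ_iff]
    simp only [hamelLevel, mem_iUnion, mem_image, mem_prod]
    constructor
    · rintro ⟨q, p, ⟨hx, hr'⟩, rfl⟩
      refine ⟨⟨p.1, hx⟩, q, hB.basis.repr p.2, ?_, ih.mp hr'⟩
      rw [map_add, show hB.basis.repr (q * p.1) = _ from hB.repr_mul_coe q ⟨p.1, hx⟩]
    · rintro ⟨i, q, g, hr, hg⟩
      refine ⟨q, (i, hB.basis.repr.symm g), ⟨i.2, ih.mpr (by simpa using hg)⟩,
        hB.basis.repr.injective ?_⟩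
      simp [hB.repr_mul_coe, hr]

noncomputable def codeCoords (b₀ : B) (y : Set ℕ) : B →₀ ℚ :=
  (hB.basis.repr (cantorFunction (1 / 3) (chi y) * b₀)).erase b₀

lemma finitelyAdditive_codeCoords (b₀ : B) : FinitelyAdditive (hB.codeCoords b₀) :=
  fun s t hst => by
    simp only [codeCoords, cantorFunction_chi_union (c := 1 / 3) (by norm_num) (by norm_num) hst,
      add_mul, map_add, Finsupp.erase_add]

lemma codeCoords_of_finite (b₀ : B) {s : Set ℕ} (hs : s.Finite) : hB.codeCoords b₀ s = 0 := by
  obtain ⟨q, hq⟩ := exists_rat_cantorFunction_chi_eq (1 / 3) hs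
  push_cast at hq
  rw [codeCoords, hq, hB.repr_mul_coe, Finsupp.erase_single]

lemma setOf_card_support_codeCoords_le (b₀ : B) (k : ℕ) :
    {y | (hB.codeCoords b₀ y).support.card ≤ k} =
      chi ⁻¹' ((fun g => cantorFunction (1 / 3) g * b₀) ⁻¹' hamelLevel B b₀ k) := by
  ext y
  exact (hB.mem_hamelLevel_iff b₀).symm

lemma not_forall_support_codeCoords_subset (b₀ : B) {W : Set ℕ} (hW : W.Infinite)
    (T : Finset B) : ¬∀ y ⊆ W, y.Infinite → (hB.codeCoords b₀ y).support ⊆ T := by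
  classical
  intro hT
  set e := Nat.nth (· ∈ W)
  have he : Injective e := (Nat.nth_strictMono hW).injective
  let code : Set ℕ → ℝ := fun s => cantorFunction (1 / 3) (chi (e '' s)) * b₀
  have hsupp : ∀ s, (hB.basis.repr (code s)).support ⊆ insert b₀ T := by
    intro s
    refine Finset.insert_erase_subset b₀ _ |>.trans (Finset.insert_subset_insert _ ?_)
    rw [← Finsupp.support_erase]
    change (hB.codeCoords b₀ (e '' s)).support ⊆ T
    by_cases hs : (e '' s).Infinite
    · exact hT _ ((image_subset_range e s).trans (Nat.range_nth_of_infinite hW).subset) hs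
    · simp [codeCoords_of_finite hB b₀ (not_infinite.mp hs)]
  have hcode : Injective code := by
    have hb₀ : (b₀ : ℝ) ≠ 0 := hB.basis_apply b₀ ▸ hB.basis.ne_zero b₀
    intro s s' h
    exact image_injective.mpr he (chi_injective
      (cantorFunction_injective (by norm_num) (by norm_num) (mul_right_cancel₀ hb₀ h)))
  -- a set is determined by finitely many rational coordinates, so `Set ℕ` would be countable
  have hinj : Injective fun s (t : ↥(insert b₀ T)) => hB.basis.repr (code s) t := by
    intro s s' h
    refine hcode (hB.basis.repr.injective (Finsupp.ext fun t => ?_))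
    by_cases ht : t ∈ insert b₀ T
    · exact congrFun h ⟨t, ht⟩
    · rw [Finsupp.notMem_support_iff.mp fun h' => ht (hsupp s h'),
        Finsupp.notMem_support_iff.mp fun h' => ht (hsupp s' h')]
  have : Countable (Set ℕ) := hinj.countable
  obtain ⟨f, hf⟩ := exists_injective_nat (Set ℕ)
  exact cantor_injective f hf

end IsHamelBasis

theorem no_hamel_basis_in_ramsey_pointclass (Γ : GoodPointclass)
    (hRamsey : ∀ X : Set (Set ℕ), (∀ x ∈ X, x.Infinite) →
      chi '' X ∈ Γ.mem (ℕ → Bool) → RamseyProp X) :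
    ∀ B : Set ℝ, IsHamelBasis B → B ∉ Γ.mem ℝ := by
  intro B hB hBΓ
  obtain ⟨b₀⟩ := hB.basis.index_nonempty
  have hc := hB.finitelyAdditive_codeCoords b₀
  obtain ⟨H, hH, hconst⟩ := exists_infinite_forall_eq
    (f := fun y => (hB.codeCoords b₀ y).support.card)
    (fun y n => by rw [hc.inter_Ici (fun s => hB.codeCoords_of_finite b₀) y n])
    fun k K hK => by
      rw [hB.setOf_card_support_codeCoords_le]
      exact exists_isHomogeneous_preimage Γ hRamsey
        ((continuous_cantorFunction (by norm_num) (by norm_num)).mul continuous_const)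
        (Γ.hamelLevel_mem hBΓ b₀ k) hK
  obtain ⟨W, -, hW, T, hT⟩ := hc.exists_support_subset hH hconst
  exact hB.not_forall_support_codeCoords_subset b₀ hW T hT
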